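/- arXiv:1709.05588 — 2 statements merged into one kernel-verified Lean document; each statement's English description precedes it below -/
import Mathlib

section
/- For any subset S of vertices of Q_n (n ≥ 3) with |S| = 3, the vertex boundary of S has at least 3n − 5 elements. -/
/-- The n-dimensional hypercube: vertices are `Fin n → Bool`,
adjacent iff Hamming distance exactly 1. -/
def Qn (n : ℕ) : SimpleGraph (Fin n → Bool) where
  Adj u v := hammingDist u v = 1
  symm := ⟨by intro u v h; rwa [hammingDist_comm]⟩
  loopless := ⟨by intro u h; simp [hammingDist_self] at h⟩

instance (n : ℕ) : DecidableRel (Qn n).Adj :=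
  fun u v => inferInstanceAs (Decidable (hammingDist u v = 1))

/-- Vertex boundary: vertices outside `S` adjacent to some vertex of `S`. -/
def vertexBoundary {V : Type*} (G : SimpleGraph V) (S : Set V) : Set V :=
  {v | v ∉ S ∧ ∃ u ∈ S, G.Adj u v}

/-!
Write `X = N(a) ∪ N(b) ∪ N(c)`, so that the boundary of `S = {a, b, c}` is `X \ S` and, by
inclusion–exclusion, `|X| = 3n - Σ |N(x) ∩ N(y)| + |N(a) ∩ N(b) ∩ N(c)|`. Two distinct vertices of
`Q_n` have at most two common neighbours, and none if they are adjacent, since `Q_n` is bipartite.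

If `S` contains an edge `ab`, bipartiteness also forbids `c` from sharing neighbours with both `a`
and `b`, so the pairwise terms total at most 2 and `|X \ S| ≥ (3n - 2) - 3`. If `S` is independent,
`X` misses `S`; the pairwise terms can only total 6 when `a, b, c` are pairwise at distance 2, and
then the two coordinates in which `a` differs from `b` and the two in which it differs from `c`
overlap, and flipping a shared one turns `a` into a common neighbour of all three.
-/
open Finset Function

theorem Finset.card_union_union_add_card_inter {α : Type*} [DecidableEq α] (A B C : Finset α) :
    #(A ∪ B ∪ C) + #(A ∩ B) + #(A ∩ C) + #(B ∩ C) = #A + #B + #C + #(A ∩ B ∩ C) := by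
  have hAB := card_union_add_card_inter A B
  have hABC := card_union_add_card_inter (A ∪ B) C
  have hACBC := card_union_add_card_inter (A ∩ C) (B ∩ C)
  rw [union_inter_distrib_right] at hABC
  rw [← inter_inter_distrib_right] at hACBC
  omega

section Hamming

variable {ι : Type*} [Fintype ι] [DecidableEq ι] {x y : ι → Bool} {i : ι}

theorem hammingDist_update_not_of_eq (h : x i = y i) :
    hammingDist (update x i (!x i)) y = hammingDist x y + 1 := by
  have hD : univ.filter (fun j => update x i (!x i) j ≠ y j) =
      insert i (univ.filter fun j => x j ≠ y j) := by
    ext j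
    rcases eq_or_ne j i with rfl | hj <;> simp [*]
  rw [hammingDist, hD, card_insert_of_notMem (by simp [h])]
  rfl

theorem hammingDist_update_not_add_one_of_ne (h : x i ≠ y i) :
    hammingDist (update x i (!x i)) y + 1 = hammingDist x y := by
  have hD : univ.filter (fun j => update x i (!x i) j ≠ y j) =
      (univ.filter fun j => x j ≠ y j).erase i := by
    ext j
    rcases eq_or_ne j i with rfl | hj
    · cases hx : x j <;> cases hy : y j <;> simp_all
    · simp [*]
  rw [hammingDist, hD, card_erase_add_one (by simpa using h)]
  rfl

theorem hammingDist_eq_one_iff : hammingDist x y = 1 ↔ ∃ i, y = update x i (!x i) := by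
  constructor
  · intro h
    obtain ⟨i, hi⟩ := card_eq_one.mp h
    refine ⟨i, funext fun j => ?_⟩
    have hj := congrArg (j ∈ ·) hi
    simp only [mem_filter, mem_univ, true_and, mem_singleton, eq_iff_iff] at hj
    rcases eq_or_ne j i with rfl | hji
    · cases hx : x j <;> simp_all
    · simpa [hji, eq_comm] using hj
  · rintro ⟨i, rfl⟩
    rw [hammingDist_comm, hammingDist_update_not_of_eq rfl, hammingDist_self]

theorem even_hammingDist_update_not_iff :
    Even (hammingDist (update x i (!x i)) y) ↔ ¬Even (hammingDist x y) := by
  by_cases h : x i = y i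
  · rw [hammingDist_update_not_of_eq h, Nat.even_add_one]
  · rw [← hammingDist_update_not_add_one_of_ne h, Nat.even_add_one, not_not]

end Hamming

theorem SimpleGraph.Coloring.eq_of_adj_of_adj {V : Type*} {G : SimpleGraph V}
    (C : G.Coloring Bool) {x y z : V} (hx : G.Adj x z) (hy : G.Adj y z) : C x = C y := by
  have hxz := C.valid hx
  have hyz := C.valid hy
  generalize C x = p, C y = q, C z = r at *
  cases p <;> cases q <;> cases r <;> simp_all

theorem SimpleGraph.vertexBoundary_coe_finset {V : Type*} [DecidableEq V] (G : SimpleGraph V)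
    [G.LocallyFinite] (s : Finset V) :
    vertexBoundary G s = ↑((s.biUnion fun v => G.neighborFinset v) \ s) := by
  ext v
  simp [vertexBoundary, and_comm]

theorem SimpleGraph.ncard_vertexBoundary_triple {V : Type*} [DecidableEq V] (G : SimpleGraph V)
    [G.LocallyFinite] (a b c : V) :
    (vertexBoundary G {a, b, c}).ncard =
      #(G.neighborFinset a ∪ G.neighborFinset b ∪ G.neighborFinset c) -
        #({a, b, c} ∩ (G.neighborFinset a ∪ G.neighborFinset b ∪ G.neighborFinset c)) := by
  have hcoe : ({a, b, c} : Set V) = ↑({a, b, c} : Finset V) := by simp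
  rw [hcoe, G.vertexBoundary_coe_finset, Set.ncard_coe_finset, card_sdiff, biUnion_insert,
    biUnion_insert, singleton_biUnion, ← union_assoc]

theorem SimpleGraph.IsIndepSet.disjoint_biUnion_neighborFinset {V : Type*} [DecidableEq V]
    {G : SimpleGraph V} [G.LocallyFinite] {s : Finset V} (hs : G.IsIndepSet s) :
    Disjoint s (s.biUnion fun v => G.neighborFinset v) := by
  rw [Finset.disjoint_left]
  intro v hv hN
  obtain ⟨u, hu, huv⟩ := mem_biUnion.mp hN
  rw [G.mem_neighborFinset] at huv
  exact hs hu hv huv.ne huv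

namespace Qn

variable {n : ℕ} {a b c x y z : Fin n → Bool}

theorem adj_iff : (Qn n).Adj x y ↔ hammingDist x y = 1 := Iff.rfl

theorem neighborFinset_eq (x : Fin n → Bool) :
    (Qn n).neighborFinset x = univ.image fun i => update x i (!x i) := by
  ext y
  simp only [SimpleGraph.mem_neighborFinset, adj_iff, hammingDist_eq_one_iff, mem_image, mem_univ,
    true_and]
  exact exists_congr fun i => eq_comm

theorem card_neighborFinset (x : Fin n → Bool) : #((Qn n).neighborFinset x) = n := by
  rw [neighborFinset_eq, card_image_of_injective, card_univ, Fintype.card_fin]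
  intro i j hij
  by_contra hne
  have := congrFun hij i
  simp [update_of_ne hne] at this

def parityColoring (n : ℕ) : (Qn n).Coloring Bool :=
  .mk (fun x => decide (Even (hammingDist x fun _ => false))) fun {x y} hxy => by
    obtain ⟨i, rfl⟩ := hammingDist_eq_one_iff.mp hxy
    simp only [ne_eq, decide_eq_decide, even_hammingDist_update_not_iff]
    tauto

theorem parityColoring_eq_of_mem_inter
    (hz : z ∈ (Qn n).neighborFinset a ∩ (Qn n).neighborFinset b) :
    parityColoring n a = parityColoring n b := by
  simp only [mem_inter, SimpleGraph.mem_neighborFinset] at hz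
  exact (parityColoring n).eq_of_adj_of_adj hz.1 hz.2

theorem inter_neighborFinset_eq_empty_of_adj (h : (Qn n).Adj a b) :
    (Qn n).neighborFinset a ∩ (Qn n).neighborFinset b = ∅ :=
  eq_empty_of_forall_notMem fun _ hz =>
    (parityColoring n).valid h (parityColoring_eq_of_mem_inter hz)

/-- A common neighbour of `a` and `b` flips a coordinate of `a` in which `a` and `b` differ. -/
theorem card_inter_neighborFinset_le_hammingDist (hab : a ≠ b) :
    #((Qn n).neighborFinset a ∩ (Qn n).neighborFinset b) ≤ hammingDist a b := by
  calc #((Qn n).neighborFinset a ∩ (Qn n).neighborFinset b)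
      ≤ #((univ.filter fun i => a i ≠ b i).image fun i => update a i (!a i)) := card_le_card ?_
    _ ≤ hammingDist a b := card_image_le
  intro z hz
  simp only [mem_inter, SimpleGraph.mem_neighborFinset, adj_iff] at hz
  obtain ⟨haz, hbz⟩ := hz
  obtain ⟨i, rfl⟩ := hammingDist_eq_one_iff.mp haz
  refine mem_image.mpr ⟨i, mem_filter.mpr ⟨mem_univ i, fun hi => hab ?_⟩, rfl⟩
  rw [hammingDist_comm, hammingDist_update_not_of_eq hi] at hbz
  exact hammingDist_eq_zero.mp (by omega)

theorem card_inter_neighborFinset_le_two (hab : a ≠ b) :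
    #((Qn n).neighborFinset a ∩ (Qn n).neighborFinset b) ≤ 2 := by
  obtain h | ⟨z, hz⟩ := ((Qn n).neighborFinset a ∩ (Qn n).neighborFinset b).eq_empty_or_nonempty
  · simp [h]
  · have hd := hammingDist_triangle a z b
    simp only [mem_inter, SimpleGraph.mem_neighborFinset, adj_iff] at hz
    rw [hz.1, hammingDist_comm z b, hz.2] at hd
    exact (card_inter_neighborFinset_le_hammingDist hab).trans hd

theorem hammingDist_eq_two_of_mem_inter (hab : a ≠ b) (h : ¬(Qn n).Adj a b)
    (hz : z ∈ (Qn n).neighborFinset a ∩ (Qn n).neighborFinset b) : hammingDist a b = 2 := by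
  have hd := hammingDist_triangle a z b
  have hpos := hammingDist_pos.mpr hab
  simp only [mem_inter, SimpleGraph.mem_neighborFinset, adj_iff] at hz h
  rw [hz.1, hammingDist_comm z b, hz.2] at hd
  omega

theorem inter_inter_neighborFinset_nonempty (hab : hammingDist a b = 2)
    (hac : hammingDist a c = 2) (hbc : hammingDist b c = 2) :
    ((Qn n).neighborFinset a ∩ (Qn n).neighborFinset b ∩ (Qn n).neighborFinset c).Nonempty := by
  obtain ⟨t, hb, hc⟩ : ∃ t, a t ≠ b t ∧ a t ≠ c t := by
    by_contra! h
    have hsub : (univ.filter fun i => a i ≠ b i) ∪ (univ.filter fun i => a i ≠ c i) ⊆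
        univ.filter fun i => b i ≠ c i := by
      intro i hi
      simp only [mem_union, mem_filter, mem_univ, true_and] at hi ⊢
      have := h i
      generalize a i = p, b i = q, c i = r at *
      cases p <;> cases q <;> cases r <;> simp_all
    have hdisj : Disjoint (univ.filter fun i => a i ≠ b i) (univ.filter fun i => a i ≠ c i) :=
      disjoint_filter.mpr fun i _ hi => not_not.mpr (h i hi)
    have := card_le_card hsub
    rw [card_union_of_disjoint hdisj] at this
    change hammingDist a b + hammingDist a c ≤ hammingDist b c at this
    omega
  refine ⟨update a t (!a t), ?_⟩
  simp only [mem_inter, SimpleGraph.mem_neighborFinset, adj_iff]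
  refine ⟨⟨hammingDist_eq_one_iff.mpr ⟨t, rfl⟩, ?_⟩, ?_⟩
  · have := hammingDist_update_not_add_one_of_ne hb
    rw [hammingDist_comm]
    omega
  · have := hammingDist_update_not_add_one_of_ne hc
    rw [hammingDist_comm]
    omega

theorem sum_card_inter_neighborFinset_le_two_of_adj (hab : (Qn n).Adj a b) (hac : a ≠ c)
    (hbc : b ≠ c) :
    #((Qn n).neighborFinset a ∩ (Qn n).neighborFinset b) +
      #((Qn n).neighborFinset a ∩ (Qn n).neighborFinset c) +
      #((Qn n).neighborFinset b ∩ (Qn n).neighborFinset c) ≤ 2 := by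
  have hac' := card_inter_neighborFinset_le_two hac
  have hbc' := card_inter_neighborFinset_le_two hbc
  have hc : #((Qn n).neighborFinset a ∩ (Qn n).neighborFinset c) = 0 ∨
      #((Qn n).neighborFinset b ∩ (Qn n).neighborFinset c) = 0 := by
    simp only [card_eq_zero, ← not_nonempty_iff_eq_empty]
    by_contra! ⟨⟨z, hz⟩, ⟨w, hw⟩⟩
    exact (parityColoring n).valid hab
      ((parityColoring_eq_of_mem_inter hz).trans (parityColoring_eq_of_mem_inter hw).symm)
  rw [inter_neighborFinset_eq_empty_of_adj hab, card_empty]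
  omega

theorem card_union_neighborFinset_add_card_inter (a b c : Fin n → Bool) :
    #((Qn n).neighborFinset a ∪ (Qn n).neighborFinset b ∪ (Qn n).neighborFinset c) +
      #((Qn n).neighborFinset a ∩ (Qn n).neighborFinset b) +
      #((Qn n).neighborFinset a ∩ (Qn n).neighborFinset c) +
      #((Qn n).neighborFinset b ∩ (Qn n).neighborFinset c) =
    3 * n + #((Qn n).neighborFinset a ∩ (Qn n).neighborFinset b ∩ (Qn n).neighborFinset c) := by
  rw [card_union_union_add_card_inter, card_neighborFinset, card_neighborFinset,
    card_neighborFinset]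
  ring

theorem le_ncard_vertexBoundary_of_adj (hab : (Qn n).Adj a b) (hac : a ≠ c) (hbc : b ≠ c) :
    3 * n - 5 ≤ (vertexBoundary (Qn n) {a, b, c}).ncard := by
  rw [SimpleGraph.ncard_vertexBoundary_triple]
  have hIE := card_union_neighborFinset_add_card_inter a b c
  have hpairs := sum_card_inter_neighborFinset_le_two_of_adj hab hac hbc
  have hS := (card_le_card (inter_subset_left (s₁ := {a, b, c})
    (s₂ := (Qn n).neighborFinset a ∪ (Qn n).neighborFinset b ∪ (Qn n).neighborFinset c))).trans
    card_le_three
  omega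

theorem le_ncard_vertexBoundary_of_not_adj (hab : a ≠ b) (hac : a ≠ c) (hbc : b ≠ c)
    (hab' : ¬(Qn n).Adj a b) (hac' : ¬(Qn n).Adj a c) (hbc' : ¬(Qn n).Adj b c) :
    3 * n - 5 ≤ (vertexBoundary (Qn n) {a, b, c}).ncard := by
  have hind : (Qn n).IsIndepSet (({a, b, c} : Finset (Fin n → Bool)) : Set (Fin n → Bool)) := by
    rw [coe_insert, coe_pair, ← SimpleGraph.isClique_compl, SimpleGraph.isClique_insert,
      SimpleGraph.isClique_pair]
    simp [hab', hac', hbc']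
  have hdisj := hind.disjoint_biUnion_neighborFinset
  rw [biUnion_insert, biUnion_insert, singleton_biUnion, ← union_assoc,
    disjoint_iff_inter_eq_empty] at hdisj
  rw [SimpleGraph.ncard_vertexBoundary_triple, hdisj, card_empty, Nat.sub_zero]
  have hIE := card_union_neighborFinset_add_card_inter a b c
  have hab2 := card_inter_neighborFinset_le_two hab
  have hac2 := card_inter_neighborFinset_le_two hac
  have hbc2 := card_inter_neighborFinset_le_two hbc
  have htriple : 0 < #((Qn n).neighborFinset a ∩ (Qn n).neighborFinset b) →
      0 < #((Qn n).neighborFinset a ∩ (Qn n).neighborFinset c) →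
      0 < #((Qn n).neighborFinset b ∩ (Qn n).neighborFinset c) →
      0 < #((Qn n).neighborFinset a ∩ (Qn n).neighborFinset b ∩ (Qn n).neighborFinset c) := by
    simp only [card_pos]
    rintro ⟨x, hx⟩ ⟨y, hy⟩ ⟨z, hz⟩
    exact inter_inter_neighborFinset_nonempty (hammingDist_eq_two_of_mem_inter hab hab' hx)
      (hammingDist_eq_two_of_mem_inter hac hac' hy) (hammingDist_eq_two_of_mem_inter hbc hbc' hz)
  omega

end Qn

theorem boundary_of_triple_general (n : ℕ)
    (S : Set (Fin n → Bool)) (hS : S.ncard = 3) :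
    3 * n - 5 ≤ (vertexBoundary (Qn n) S).ncard := by
  obtain ⟨a, b, c, hab, hac, hbc, rfl⟩ := Set.ncard_eq_three.mp hS
  by_cases hadj : (Qn n).Adj a b ∨ (Qn n).Adj a c ∨ (Qn n).Adj b c
  · rcases hadj with h | h | h
    · exact Qn.le_ncard_vertexBoundary_of_adj h hac hbc
    · rw [Set.pair_comm b c]
      exact Qn.le_ncard_vertexBoundary_of_adj h hab hbc.symm
    · rw [Set.insert_comm a b, Set.pair_comm a c]
      exact Qn.le_ncard_vertexBoundary_of_adj h hab.symm hac.symm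
  · rw [not_or, not_or] at hadj
    exact Qn.le_ncard_vertexBoundary_of_not_adj hab hac hbc hadj.1 hadj.2.1 hadj.2.2

theorem boundary_of_triple (n : ℕ) (hn : 3 ≤ n)
    (S : Set (Fin n → Bool)) (hS : S.ncard = 3) :
    3 * n - 5 ≤ (vertexBoundary (Qn n) S).ncard :=
  boundary_of_triple_general n S hS
end

section
/- Let n ≥ 3 and 1 ≤ h ≤ n − 1. Suppose F_e ⊆ E(Q_n) with |F_e| ≤ h and F₁, F₂ ⊆ V(Q_n) with |F₁|, |F₂| ≤ n − h and |F₁ Δ F₂| = 2. Then there is an edge of Q_n − F_e between V − (F₁ ∪ F₂) and F₁ Δ F₂. -/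
/-!
The vertex boundary of a pair `{u, v}` in `Q_n` has at least `2n - 2` vertices, because two
distinct vertices of `Q_n` have at most two common neighbours, and none when they are adjacent.
Suppose no edge of `Q_n - F_e` joins `V - (F₁ ∪ F₂)` to `S = F₁ ∆ F₂`. A boundary vertex of `S`
then either lies in `(F₁ ∪ F₂) - S`, which has at most `2(n - h) - 2` elements, or lies outside
`F₁ ∪ F₂`, and then its edge to `S` is a deleted edge, distinct for distinct vertices. So the
boundary has at most `2n - h - 2 < 2n - 2` vertices.
-/

open Set Function

namespace SimpleGraph

variable {V : Type*} (G : SimpleGraph V)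

def vertexBoundary (S : Set V) : Set V := {x | x ∉ S ∧ ∃ y ∈ S, G.Adj x y}

theorem vertexBoundary_pair (u v : V) :
    G.vertexBoundary {u, v} = (G.neighborSet u ∪ G.neighborSet v) \ {u, v} := by
  ext x
  simp only [vertexBoundary, mem_ofPred_eq, mem_sdiff, mem_union, mem_neighborSet,
    mem_insert_iff, mem_singleton_iff, exists_eq_or_imp, exists_eq_left, G.adj_comm x]
  tauto

theorem ncard_neighborSet_add_ncard_neighborSet [Finite V] (u v : V) :
    (G.neighborSet u).ncard + (G.neighborSet v).ncard =
      (G.vertexBoundary {u, v}).ncard + (G.commonNeighbors u v).ncard +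
        ((G.neighborSet u ∪ G.neighborSet v) ∩ {u, v}).ncard := by
  rw [← ncard_union_add_ncard_inter, vertexBoundary_pair, commonNeighbors,
    ← ncard_inter_add_ncard_sdiff_eq_ncard _ {u, v}]
  ring

theorem ncard_vertexBoundary_le [Finite V] {Fe : Set (Sym2 V)} {S F : Set V} (hSF : S ⊆ F)
    (hsep : ∀ x ∉ F, ∀ y ∈ S, ¬(G.deleteEdges Fe).Adj x y) :
    (G.vertexBoundary S).ncard ≤ (F \ S).ncard + Fe.ncard := by
  set T := {x | x ∉ F ∧ ∃ y ∈ S, G.Adj x y}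
  have hsub : G.vertexBoundary S ⊆ (F \ S) ∪ T := fun x ⟨hxS, hadj⟩ => by
    by_cases hxF : x ∈ F
    exacts [Or.inl ⟨hxF, hxS⟩, Or.inr ⟨hxF, hadj⟩]
  have hT : T.ncard ≤ Fe.ncard := by
    choose! g hgS hgadj using fun x (hx : x ∈ T) => hx.2
    refine ncard_le_ncard_of_injOn (fun x => s(x, g x)) (fun x hx => ?_) ?_
    · simpa [deleteEdges_adj, hgadj x hx] using hsep x hx.1 (g x) (hgS x hx)
    · intro x hx x' hx' hxx'
      rcases Sym2.eq_iff.mp hxx' with ⟨h, -⟩ | ⟨h, -⟩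
      · exact h
      · exact absurd (h ▸ hSF (hgS x' hx')) hx.1
  calc (G.vertexBoundary S).ncard ≤ ((F \ S) ∪ T).ncard := ncard_le_ncard hsub
    _ ≤ (F \ S).ncard + T.ncard := ncard_union_le _ _
    _ ≤ (F \ S).ncard + Fe.ncard := by omega

end SimpleGraph

section FlipAt

variable {ι : Type*} [DecidableEq ι]

def flipAt (u : ι → Bool) (i : ι) : ι → Bool := update u i (!u i)

@[simp]
theorem flipAt_apply_self (u : ι → Bool) (i : ι) : flipAt u i i = !u i := update_self ..

theorem flipAt_apply_of_ne (u : ι → Bool) {i j : ι} (h : j ≠ i) : flipAt u i j = u j :=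
  update_of_ne h ..

theorem flipAt_injective (u : ι → Bool) : Injective (flipAt u) := by
  intro i j hij
  by_contra hne
  have := congrFun hij i
  rw [flipAt_apply_self, flipAt_apply_of_ne u hne] at this
  exact Bool.not_ne_self _ this

theorem filter_ne_eq_singleton_iff [Fintype ι] {u x : ι → Bool} {i : ι} :
    ({j | u j ≠ x j} : Finset ι) = {i} ↔ x = flipAt u i := by
  simp only [Finset.ext_iff, Finset.mem_filter, Finset.mem_univ, true_and,
    Finset.mem_singleton, funext_iff]
  refine forall_congr' fun j => ?_
  rcases eq_or_ne j i with rfl | hj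
  · rw [flipAt_apply_self]
    cases u j <;> cases x j <;> simp
  · rw [flipAt_apply_of_ne u hj]
    cases u j <;> cases x j <;> simp [hj]

end FlipAt

namespace Qn

variable {n : ℕ} {u v x : Fin n → Bool}

theorem adj_iff_exists_flipAt : (Qn n).Adj u x ↔ ∃ i, x = flipAt u i := by
  simp only [← filter_ne_eq_singleton_iff, ← Finset.card_eq_one]
  rfl

theorem neighborSet_eq_range (u : Fin n → Bool) : (Qn n).neighborSet u = range (flipAt u) := by
  ext x
  simp [adj_iff_exists_flipAt, eq_comm]

theorem ncard_neighborSet (u : Fin n → Bool) : ((Qn n).neighborSet u).ncard = n := by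
  rw [neighborSet_eq_range, ncard_range_of_injective (flipAt_injective u), Nat.card_eq_fintype_card,
    Fintype.card_fin]

theorem commonNeighbors_subset (huv : u ≠ v) :
    (Qn n).commonNeighbors u v ⊆ flipAt u '' {i | u i ≠ v i} := by
  rintro x hx
  obtain ⟨⟨i, rfl⟩, ⟨j, hj⟩⟩ := (((Qn n).mem_commonNeighbors).mp hx).imp
    adj_iff_exists_flipAt.mp adj_iff_exists_flipAt.mp
  refine ⟨i, fun hi => ?_, rfl⟩
  rcases eq_or_ne j i with rfl | hji
  · refine huv (funext fun k => ?_)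
    rcases eq_or_ne k j with rfl | hk
    · exact hi
    · simpa [flipAt_apply_of_ne _ hk] using congrFun hj k
  · have := congrFun hj i
    rw [flipAt_apply_self, flipAt_apply_of_ne v hji.symm, ← hi] at this
    exact Bool.not_ne_self _ this

theorem ncard_commonNeighbors_le_two (huv : u ≠ v) : ((Qn n).commonNeighbors u v).ncard ≤ 2 := by
  obtain hempty | ⟨x, hx⟩ := ((Qn n).commonNeighbors u v).eq_empty_or_nonempty
  · simp [hempty]
  have hD : {i | u i ≠ v i}.ncard = hammingDist u v := by
    rw [hammingDist, ← ncard_coe_finset]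
    congr
    ext
    simp
  obtain ⟨hux, hvx⟩ := ((Qn n).mem_commonNeighbors).mp hx
  calc ((Qn n).commonNeighbors u v).ncard ≤ (flipAt u '' {i | u i ≠ v i}).ncard :=
        ncard_le_ncard (commonNeighbors_subset huv)
    _ ≤ hammingDist u v := hD ▸ ncard_image_le
    _ ≤ hammingDist u x + hammingDist x v := hammingDist_triangle u x v
    _ = 2 := by rw [hux, hammingDist_comm, hvx]

theorem commonNeighbors_eq_empty_of_adj (huv : (Qn n).Adj u v) :
    (Qn n).commonNeighbors u v = ∅ := by
  refine eq_empty_of_forall_notMem fun x hx => ?_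
  obtain ⟨j, rfl⟩ := adj_iff_exists_flipAt.mp huv
  obtain ⟨i, hi, rfl⟩ := commonNeighbors_subset huv.ne hx
  rcases eq_or_ne i j with rfl | hij
  · exact (Qn n).irrefl (((Qn n).mem_commonNeighbors).mp hx).2
  · exact hi (flipAt_apply_of_ne u hij).symm

theorem ncard_commonNeighbors_add_le_two (huv : u ≠ v) :
    ((Qn n).commonNeighbors u v).ncard +
      (((Qn n).neighborSet u ∪ (Qn n).neighborSet v) ∩ {u, v}).ncard ≤ 2 := by
  by_cases hadj : (Qn n).Adj u v
  · rw [commonNeighbors_eq_empty_of_adj hadj, ncard_empty, zero_add, ← ncard_pair huv]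
    exact ncard_le_ncard inter_subset_right
  · have : ((Qn n).neighborSet u ∪ (Qn n).neighborSet v) ∩ {u, v} = ∅ := by
      ext x
      simp only [mem_inter_iff, mem_union, SimpleGraph.mem_neighborSet, mem_insert_iff,
        mem_singleton_iff, mem_empty_iff_false, iff_false, not_and]
      rintro (h | h) (rfl | rfl)
      all_goals first | exact (Qn n).irrefl h | exact hadj h | exact hadj h.symm
    rw [this, ncard_empty, add_zero]
    exact ncard_commonNeighbors_le_two huv

theorem le_ncard_vertexBoundary_pair (huv : u ≠ v) :
    2 * n - 2 ≤ ((Qn n).vertexBoundary {u, v}).ncard := by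
  have := (Qn n).ncard_neighborSet_add_ncard_neighborSet u v
  rw [ncard_neighborSet, ncard_neighborSet] at this
  have := ncard_commonNeighbors_add_le_two huv
  omega

end Qn

theorem distinguishable_symmDiff_two_general (n h : ℕ) (hh1 : 1 ≤ h)
    (Fe : Set (Sym2 (Fin n → Bool)))
    (hFec : Fe.ncard ≤ h)
    (F₁ F₂ : Set (Fin n → Bool))
    (h1 : F₁.ncard ≤ n - h) (h2 : F₂.ncard ≤ n - h)
    (hΔ : (symmDiff F₁ F₂).ncard = 2) :
    ∃ x, x ∉ F₁ ∪ F₂ ∧ ∃ y ∈ symmDiff F₁ F₂, ((Qn n).deleteEdges Fe).Adj x y := by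
  by_contra! hsep
  have hSF : symmDiff F₁ F₂ ⊆ F₁ ∪ F₂ := symmDiff_subset_union
  have hupper := (Qn n).ncard_vertexBoundary_le hSF hsep
  have hrest : ((F₁ ∪ F₂) \ symmDiff F₁ F₂).ncard + 2 ≤ F₁.ncard + F₂.ncard := by
    rw [← hΔ, ncard_sdiff_add_ncard_of_subset hSF]
    exact ncard_union_le _ _
  obtain ⟨u, v, huv, hS⟩ := ncard_eq_two.mp hΔ
  have hlower := Qn.le_ncard_vertexBoundary_pair huv
  rw [← hS] at hlower
  omega

theorem distinguishable_symmDiff_two (n h : ℕ) (hn : 3 ≤ n) (hh1 : 1 ≤ h)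
    (hhn : h ≤ n - 1) (Fe : Set (Sym2 (Fin n → Bool)))
    (hFe : Fe ⊆ (Qn n).edgeSet) (hFec : Fe.ncard ≤ h)
    (F₁ F₂ : Set (Fin n → Bool))
    (h1 : F₁.ncard ≤ n - h) (h2 : F₂.ncard ≤ n - h)
    (hΔ : (symmDiff F₁ F₂).ncard = 2) :
    ∃ x, x ∉ F₁ ∪ F₂ ∧ ∃ y ∈ symmDiff F₁ F₂, ((Qn n).deleteEdges Fe).Adj x y :=
  distinguishable_symmDiff_two_general n h hh1 Fe hFec F₁ F₂ h1 h2 hΔ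
end
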